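/- arXiv:1806.11443 — 7 statements merged into one kernel-verified Lean document; each statement's English description precedes it below -/
import Mathlib

section
/- Let R be a commutative ring with 1 ≠ 0 and T(R) its total ring of fractions. The graph Γ̃(R) is complete if and only if Γ̃(T(R)) is complete. -/
/-- x is a zero-divisor (including 0 in a nontrivial ring). -/
def IsZD {R : Type} [CommRing R] (x : R) : Prop := ∃ y : R, y ≠ 0 ∧ x * y = 0

/-- Adjacency relation of the graph Γ̃(R): xy = 0 or x + y ∈ Z(R). -/
def GTAdj {R : Type} [CommRing R] (x y : R) : Prop := x * y = 0 ∨ IsZD (x + y)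

/-- Γ̃(R) is a complete graph: any two distinct nonzero zero-divisors are adjacent. -/
def GTComplete (R : Type) [CommRing R] : Prop :=
  ∀ x y : R, IsZD x → x ≠ 0 → IsZD y → y ≠ 0 → x ≠ y → GTAdj x y

/-!
Any two elements of a localization `S` of `R` at non-zero-divisors can be written as `a / d`
and `b / d` with `a b d : R`, where `d` is a unit of `S`. Multiplication by a unit
preserves zero-divisors and adjacency in Γ̃, and the injective map `R → S` reflects
zero-divisors (a witness `r / m` in `S` gives the witness `r` in `R`). Hence a non-adjacent
pair in either graph yields one in the other.
-/

section Units

variable {R : Type} [CommRing R] {x y : R}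

theorem IsZD.mul_right (h : IsZD x) (c : R) : IsZD (x * c) := by
  obtain ⟨z, hz0, hz⟩ := h
  exact ⟨z, hz0, by rw [mul_right_comm, hz, zero_mul]⟩

theorem isZD_mul_unit_iff (u : Rˣ) : IsZD (x * u) ↔ IsZD x :=
  ⟨fun h => by simpa using h.mul_right ↑u⁻¹, fun h => h.mul_right u⟩

theorem gtAdj_mul_unit_iff (u : Rˣ) : GTAdj (x * u) (y * u) ↔ GTAdj x y := by
  have hprod : x * u * (y * u) = x * y * ↑(u * u) := by push_cast; ring
  rw [GTAdj, GTAdj, hprod, Units.mul_left_eq_zero, ← add_mul, isZD_mul_unit_iff]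

end Units

section Localization

variable {R S : Type} [CommRing R] [CommRing S] [Algebra R S]
  {M : Submonoid R} [IsLocalization M S]

theorem isZD_algebraMap_iff (hM : M ≤ nonZeroDivisors R) {a : R} :
    IsZD (algebraMap R S a) ↔ IsZD a := by
  have hinj := IsLocalization.injective S hM
  constructor
  · rintro ⟨t, ht0, ht⟩
    obtain ⟨⟨r, m⟩, hr⟩ := IsLocalization.surj M t
    refine ⟨r, ?_, hinj ?_⟩
    · rintro rfl
      rw [map_zero, (IsLocalization.map_units S m).mul_left_eq_zero] at hr
      exact ht0 hr
    · rw [map_mul, ← hr, ← mul_assoc, ht, zero_mul, map_zero]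
  · rintro ⟨z, hz0, hz⟩
    exact ⟨algebraMap R S z, (map_ne_zero_iff _ hinj).mpr hz0, by rw [← map_mul, hz, map_zero]⟩

theorem gtAdj_algebraMap_iff (hM : M ≤ nonZeroDivisors R) {a b : R} :
    GTAdj (algebraMap R S a) (algebraMap R S b) ↔ GTAdj a b := by
  rw [GTAdj, GTAdj, ← map_mul, ← map_add, isZD_algebraMap_iff hM,
    map_eq_zero_iff _ (IsLocalization.injective S hM)]

theorem gtComplete_iff_of_le_nonZeroDivisors (hM : M ≤ nonZeroDivisors R) :
    GTComplete R ↔ GTComplete S := by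
  have hinj := IsLocalization.injective S hM
  constructor
  · intro hR X Y hX hX0 hY hY0 hXY
    obtain ⟨a, b, d, ha, hb⟩ := IsLocalization.surj₂ M S X Y
    set u := (IsLocalization.map_units S d).unit
    have hu : (u : S) = algebraMap R S d := rfl
    rw [← isZD_mul_unit_iff u, hu, ha, isZD_algebraMap_iff hM] at hX
    rw [← isZD_mul_unit_iff u, hu, hb, isZD_algebraMap_iff hM] at hY
    rw [ne_eq, ← Units.mul_left_eq_zero u, hu, ha, map_eq_zero_iff _ hinj] at hX0
    rw [ne_eq, ← Units.mul_left_eq_zero u, hu, hb, map_eq_zero_iff _ hinj] at hY0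
    rw [ne_eq, ← Units.mul_left_inj u, hu, ha, hb, hinj.eq_iff] at hXY
    rw [← gtAdj_mul_unit_iff u, hu, ha, hb, gtAdj_algebraMap_iff hM]
    exact hR a b hX hX0 hY hY0 hXY
  · intro hS x y hx hx0 hy hy0 hxy
    rw [← gtAdj_algebraMap_iff (S := S) hM]
    rw [← isZD_algebraMap_iff (S := S) hM] at hx hy
    rw [← map_ne_zero_iff _ hinj] at hx0 hy0
    exact hS _ _ hx hx0 hy hy0 (hinj.ne hxy)

end Localization

theorem stmt0_general (R : Type) [CommRing R] :
    GTComplete R ↔ GTComplete (FractionRing R) :=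
  gtComplete_iff_of_le_nonZeroDivisors le_rfl

theorem stmt0 (R : Type) [CommRing R] [Nontrivial R] :
    GTComplete R ↔ GTComplete (FractionRing R) :=
  stmt0_general R
end

section
/- Let R ≅ R₁ × ⋯ × Rₙ be a product of n ≥ 3 nontrivial commutative rings. If Γ̃(R) is complete, then R is a Boolean ring (every element is idempotent). -/
section CommRing

variable {R R' : Type} [CommRing R] [CommRing R']

lemma IsZD.map_ringEquiv (e : R ≃+* R') {x : R} (hx : IsZD x) : IsZD (e x) := by
  obtain ⟨y, hy, hxy⟩ := hx
  exact ⟨e y, e.map_ne_zero_iff.mpr hy, by rw [← map_mul, hxy, map_zero]⟩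

lemma not_isZD_one : ¬ IsZD (1 : R) := by
  rintro ⟨y, hy, h1y⟩
  exact hy (by simpa using h1y)

lemma GTComplete.of_ringEquiv (e : R ≃+* R') (h : GTComplete R) : GTComplete R' := by
  intro x y hx hx0 hy hy0 hxy
  have hadj := h (e.symm x) (e.symm y) (hx.map_ringEquiv e.symm) (e.symm.map_ne_zero_iff.mpr hx0)
    (hy.map_ringEquiv e.symm) (e.symm.map_ne_zero_iff.mpr hy0) (e.symm.injective.ne hxy)
  rcases hadj with hmul | hsum
  · left
    simpa using congrArg e hmul
  · right
    rw [← map_add] at hsum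
    simpa using hsum.map_ringEquiv e

lemma GTComplete.mul_one_sub_eq_zero (h : GTComplete R) {x : R} (hx : IsZD x) (hx0 : x ≠ 0)
    (hy : IsZD (1 - x)) (hy0 : 1 - x ≠ 0) (hne : x ≠ 1 - x) : x * (1 - x) = 0 := by
  refine (h x (1 - x) hx hx0 hy hy0 hne).resolve_right ?_
  rw [add_sub_cancel]
  exact not_isZD_one

end CommRing

lemma Fintype.exists_ne_ne_of_three_le_card {ι : Type*} [Fintype ι] [DecidableEq ι]
    (hcard : 3 ≤ Fintype.card ι) (i : ι) : ∃ j k : ι, j ≠ i ∧ k ≠ i ∧ j ≠ k := by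
  have hlt : 1 < (Finset.univ.erase i).card := by
    rw [Finset.card_erase_of_mem (Finset.mem_univ i), Finset.card_univ]
    omega
  obtain ⟨j, hj, k, hk, hjk⟩ := Finset.one_lt_card.mp hlt
  exact ⟨j, k, Finset.ne_of_mem_erase hj, Finset.ne_of_mem_erase hk, hjk⟩

namespace Pi

variable {ι : Type} [DecidableEq ι] {S : ι → Type} [∀ i, CommRing (S i)]

lemma isZD_of_apply_eq_zero {x : ∀ i, S i} {j : ι} [Nontrivial (S j)] (hj : x j = 0) :
    IsZD x :=
  ⟨Pi.single j 1, by simp, by rw [← Pi.single_mul_right, hj, zero_mul, Pi.single_zero]⟩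

lemma isIdempotentElem_of_gtComplete [∀ i, Nontrivial (S i)] (h : GTComplete (∀ i, S i))
    {i j k : ι} (hji : j ≠ i) (hki : k ≠ i) (hjk : j ≠ k) (a : S i) : IsIdempotentElem a := by
  set x : ∀ m, S m := Function.update (Function.update 1 j 0) i a
  have hxi : x i = a := by simp [x]
  have hxj : x j = 0 := by simp [x, hji]
  have hxk : x k = 1 := by simp [x, hki, hjk.symm]
  have hyj : (1 - x) j = 1 := by simp [hxj]
  have hyk : (1 - x) k = 0 := by simp [hxk]
  have hx0 : x ≠ 0 := fun h0 => one_ne_zero (hxk.symm.trans (congrFun h0 k))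
  have hy0 : 1 - x ≠ 0 := fun h0 => one_ne_zero (hyj.symm.trans (congrFun h0 j))
  have hne : x ≠ 1 - x := fun h0 => zero_ne_one (hxj.symm.trans ((congrFun h0 j).trans hyj))
  rw [isIdempotentElem_iff_mul_one_sub_self, ← hxi]
  simpa using congrFun (h.mul_one_sub_eq_zero (isZD_of_apply_eq_zero hxj) hx0
    (isZD_of_apply_eq_zero hyk) hy0 hne) i

end Pi

theorem stmt1 (n : ℕ) (hn : 3 ≤ n) (S : Fin n → Type) [∀ i, CommRing (S i)]
    [∀ i, Nontrivial (S i)] (R : Type) [CommRing R] (e : R ≃+* ∀ i, S i)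
    (h : GTComplete R) : ∀ x : R, x * x = x := by
  have hP : GTComplete (∀ i, S i) := h.of_ringEquiv e
  intro x
  apply e.injective
  ext i
  obtain ⟨j, k, hji, hki, hjk⟩ :=
    Fintype.exists_ne_ne_of_three_le_card (by rwa [Fintype.card_fin]) i
  simpa using (Pi.isIdempotentElem_of_gtComplete hP hji hki hjk (e x i)).eq
end

section
/- If R is (up to isomorphism) a subring of a product of two integral domains, then Γ̃(R) is complete. -/
/-- Auxiliary: R embeds as a subring in A × B with A, B integral domains. -/
def EmbedsInProdDomainsAux (R A B : Type) [CommRing R] [CommRing A] [CommRing B] : Prop :=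
  IsDomain A ∧ IsDomain B ∧ ∃ f : R →+* A × B, Function.Injective f

/-- R is (up to isomorphism) a subring of a product of two integral domains. -/
def EmbedsInProdDomains (R : Type) [iR : CommRing R] : Prop :=
  ∃ (A B : Type) (iA : CommRing A) (iB : CommRing B), @EmbedsInProdDomainsAux R A B iR iA iB

open Function

section ProdDomains

variable {R : Type} {A B : Type*} [CommRing R] [Semiring A] [Semiring B]
  {f : R →+* A × B} (hf : Injective f) {x y : R}
include hf

theorem mul_eq_zero_of_fst_eq_zero_of_snd_eq_zero (hx : (f x).1 = 0) (hy : (f y).2 = 0) :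
    x * y = 0 :=
  (injective_iff_map_eq_zero f).mp hf _ <| by
    ext <;> simp [hx, hy]

theorem IsZD.fst_eq_zero_or_snd_eq_zero [NoZeroDivisors A] [NoZeroDivisors B] (hx : IsZD x) :
    (f x).1 = 0 ∨ (f x).2 = 0 := by
  obtain ⟨u, hu, hxu⟩ := hx
  have hfu : f x * f u = 0 := by rw [← map_mul, hxu, map_zero]
  have hu' : f u ≠ 0 := (map_ne_zero_iff f hf).mpr hu
  rcases mul_eq_zero.mp congr(($hfu).1) with h1 | h1
  · exact .inl h1
  rcases mul_eq_zero.mp congr(($hfu).2) with h2 | h2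
  · exact .inr h2
  · exact absurd (Prod.ext h1 h2) hu'

theorem IsZD.add_of_fst_eq_zero [NoZeroDivisors B] (hx : IsZD x) (hx0 : x ≠ 0)
    (hx1 : (f x).1 = 0) (hy1 : (f y).1 = 0) : IsZD (x + y) := by
  obtain ⟨u, hu, hxu⟩ := hx
  have hx2 : (f x).2 ≠ 0 := fun hx2 => (map_ne_zero_iff f hf).mpr hx0 (Prod.ext hx1 hx2)
  have hu2 : (f u).2 = 0 := by
    have hfu : f x * f u = 0 := by rw [← map_mul, hxu, map_zero]
    exact (mul_eq_zero.mp congr(($hfu).2)).resolve_left hx2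
  refine ⟨u, hu, ?_⟩
  rw [add_mul, hxu, zero_add]
  exact mul_eq_zero_of_fst_eq_zero_of_snd_eq_zero hf hy1 hu2

end ProdDomains

theorem stmt2_general (R : Type) [CommRing R] (h : EmbedsInProdDomains R) :
    GTComplete R := by
  obtain ⟨A, B, _, _, _, _, f, hf⟩ := h
  have hg : Injective ((RingEquiv.prodComm : A × B ≃+* B × A).toRingHom.comp f) :=
    RingEquiv.prodComm.injective.comp hf
  intro x y hx hx0 hy _ _
  rcases hx.fst_eq_zero_or_snd_eq_zero hf with hx1 | hx2 <;>
    rcases hy.fst_eq_zero_or_snd_eq_zero hf with hy1 | hy2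
  · exact .inr (hx.add_of_fst_eq_zero hf hx0 hx1 hy1)
  · exact .inl (mul_eq_zero_of_fst_eq_zero_of_snd_eq_zero hf hx1 hy2)
  · exact .inl (mul_comm x y ▸ mul_eq_zero_of_fst_eq_zero_of_snd_eq_zero hf hy1 hx2)
  · exact .inr (hx.add_of_fst_eq_zero hg hx0 hx2 hy2)

theorem stmt2 (R : Type) [CommRing R] [Nontrivial R] (h : EmbedsInProdDomains R) :
    GTComplete R :=
  stmt2_general R h
end

section
/- Let R be a commutative ring with 1 ≠ 0. The graph Γ̃(R) is complete if and only if R is Boolean, or Z(R) is an ideal of R, or R is isomorphic to a subring of a product of two integral domains. -/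
/-!
If `Z(R)` is not closed under addition, there are zero-divisors `a, b` with `s = a + b` regular,
and completeness forces `a * b = 0`. Completeness also gives `x * (s - x) = 0` whenever `x` and
`s - x` are zero-divisors. For `x = y * b + p`, where `b * (s - b) = 0` and `p, q` are nonzero,
kill each other and kill `b`, this yields `(y ^ 2 - y) * b = 0` for every `y`.
As `ann a ⊓ ann b ⊆ ann s = 0`, the ring embeds in `R ⧸ ann a × R ⧸ ann b`. If `ann a` is not prime,
say `u * v * a = 0` with `u * a, v * a ≠ 0`, then `p = u * a`, `q = v * a` show that `y ^ 2 - y`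
kills `b`, and the same argument for the pieces of `a = u * a + (1 - u) * a` shows that it kills
`a`; hence it kills `s`, and `R` is Boolean.
-/

section

variable {R : Type} [CommRing R]

lemma eq_zero_of_mul_eq_zero_of_not_isZD {s y : R} (hs : ¬ IsZD s) (h : s * y = 0) : y = 0 := by
  by_contra hy
  exact hs ⟨y, hy, h⟩

lemma ne_zero_of_not_isZD_add {a b : R} (hb : IsZD b) (hs : ¬ IsZD (a + b)) : a ≠ 0 := by
  rintro rfl
  exact hs (by rwa [zero_add])

lemma exists_ideal_coe_eq_setOf_isZD [Nontrivial R]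
    (hadd : ∀ x y : R, IsZD x → IsZD y → IsZD (x + y)) :
    ∃ I : Ideal R, (I : Set R) = {x | IsZD x} :=
  ⟨{ carrier := {x | IsZD x}
     add_mem' := hadd _ _
     zero_mem' := ⟨1, one_ne_zero, zero_mul 1⟩
     smul_mem' := fun c _ ⟨y, hy, hzy⟩ => ⟨y, hy, by rw [smul_eq_mul, mul_assoc, hzy, mul_zero]⟩ },
    rfl⟩

namespace GTComplete

variable (hC : GTComplete R) {s : R} (hs : ¬ IsZD s)
include hC hs

lemma mul_sub_eq_zero {x : R} (hx : IsZD x) (hx' : IsZD (s - x)) : x * (s - x) = 0 := by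
  by_cases hx0 : x = 0
  · rw [hx0, zero_mul]
  by_cases hsx : s - x = 0
  · exact absurd (sub_eq_zero.mp hsx ▸ hx) hs
  by_cases heq : x = s - x
  · obtain ⟨y, hy, hxy⟩ := hx
    exact absurd ⟨y, hy, by linear_combination y * heq.symm + 2 * hxy⟩ hs
  refine (hC x (s - x) hx hx0 hx' hsx heq).resolve_right ?_
  rwa [add_sub_cancel]

variable {b p q : R} (hbs : b * b = s * b) (hq : q ≠ 0) (hpb : p * b = 0) (hqb : q * b = 0)
  (hpq : p * q = 0)
include hbs hq hpb hqb hpq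

lemma mul_self_eq_mul (hb : b ≠ 0) : p * p = s * p := by
  have key := hC.mul_sub_eq_zero hs (x := p + b) ⟨q, hq, by linear_combination hpq + hqb⟩
    ⟨b, hb, by linear_combination -hbs - hpb⟩
  linear_combination -key - hbs - 2 * hpb

lemma mul_self_sub_mul_eq_zero (hp : p ≠ 0) (x : R) : (x * x - x) * b = 0 := by
  by_cases hb : b = 0
  · rw [hb, mul_zero]
  have hps := hC.mul_self_eq_mul hs hbs hq hpb hqb hpq hb
  have key := hC.mul_sub_eq_zero hs (x := x * b + p) ⟨q, hq, by linear_combination x * hqb + hpq⟩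
    ⟨p, hp, by linear_combination -hps - x * hpb⟩
  exact eq_zero_of_mul_eq_zero_of_not_isZD hs <| by
    linear_combination -(x * x) * hbs - key - hps - 2 * x * hpb

end GTComplete

lemma GTComplete.mul_eq_zero_of_not_isZD_add (hC : GTComplete R) {a b : R} (ha : IsZD a)
    (hb : IsZD b) (hs : ¬ IsZD (a + b)) : a * b = 0 := by
  have hab : a ≠ b := by
    rintro rfl
    obtain ⟨y, hy, hay⟩ := ha
    exact hs ⟨y, hy, by linear_combination 2 * hay⟩
  exact (hC a b ha (ne_zero_of_not_isZD_add hb hs) hb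
    (ne_zero_of_not_isZD_add ha (add_comm a b ▸ hs)) hab).resolve_right hs

lemma GTComplete.mul_self_eq_of_not_isPrime (hC : GTComplete R) {a b : R} (hab : a * b = 0)
    (hs : ¬ IsZD (a + b)) (ha : a ≠ 0) (hb : b ≠ 0) (hP : ¬ (R ∙ a).annihilator.IsPrime) (x : R) :
    x * x = x := by
  have hne : (R ∙ a).annihilator ≠ ⊤ := by
    rwa [Ideal.ne_top_iff_one, Submodule.mem_annihilator_span_singleton, one_smul]
  simp only [Ideal.isPrime_iff, Submodule.mem_annihilator_span_singleton, smul_eq_mul] at hP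
  push Not at hP
  obtain ⟨u, v, huv, hu, hv⟩ := hP hne
  have hbs : b * b = (a + b) * b := by linear_combination -hab
  have hua := hC.mul_self_eq_mul hs hbs hv (p := u * a)
    (by linear_combination u * hab) (by linear_combination v * hab)
    (by linear_combination a * huv) hb
  have on_b := hC.mul_self_sub_mul_eq_zero hs hbs hv (p := u * a)
    (by linear_combination u * hab) (by linear_combination v * hab)
    (by linear_combination a * huv) hu x
  have on_ua := hC.mul_self_sub_mul_eq_zero hs hua hb (p := v * a)
    (by linear_combination a * huv) (by linear_combination u * hab)
    (by linear_combination v * hab) hv x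
  have on_a_sub_ua := hC.mul_self_sub_mul_eq_zero hs (b := a - u * a)
    (by linear_combination hua + (2 * u - 1) * hab)
    hu (p := b) (by linear_combination (1 - u) * hab)
    (by linear_combination -hua - u * hab)
    (by linear_combination u * hab) hb x
  exact sub_eq_zero.mp <| eq_zero_of_mul_eq_zero_of_not_isZD hs <| by
    linear_combination on_b + on_ua + on_a_sub_ua

lemma annihilator_inf_annihilator_eq_bot {a b : R} (hs : ¬ IsZD (a + b)) :
    (R ∙ a).annihilator ⊓ (R ∙ b).annihilator = ⊥ := by
  refine eq_bot_iff.mpr fun z hz => ?_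
  simp only [Submodule.mem_inf, Submodule.mem_annihilator_span_singleton, smul_eq_mul] at hz
  exact eq_zero_of_mul_eq_zero_of_not_isZD hs (by linear_combination hz.1 + hz.2)

lemma embedsInProdDomains_iff :
    EmbedsInProdDomains R ↔ ∃ P Q : Ideal R, P.IsPrime ∧ Q.IsPrime ∧ P ⊓ Q = ⊥ := by
  constructor
  · rintro ⟨A, B, _, _, _, _, f, hf⟩
    refine ⟨RingHom.ker ((RingHom.fst A B).comp f), RingHom.ker ((RingHom.snd A B).comp f),
      RingHom.ker_isPrime _, RingHom.ker_isPrime _, eq_bot_iff.mpr fun z hz => ?_⟩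
    simp only [Submodule.mem_inf, RingHom.mem_ker, RingHom.comp_apply] at hz
    exact hf (Prod.ext (by simpa using hz.1) (by simpa using hz.2))
  · rintro ⟨P, Q, _, _, hPQ⟩
    refine ⟨R ⧸ P, R ⧸ Q, _, _, inferInstance, inferInstance,
      (Ideal.Quotient.mk P).prod (Ideal.Quotient.mk Q), fun z w hzw => ?_⟩
    simp only [RingHom.prod_apply, Prod.mk.injEq, Ideal.Quotient.eq] at hzw
    have : z - w ∈ P ⊓ Q := ⟨hzw.1, hzw.2⟩
    rwa [hPQ, Submodule.mem_bot, sub_eq_zero] at this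

section PrimePair

variable {P Q : Ideal R} (hPQ : P ⊓ Q = ⊥)
include hPQ

lemma mem_or_mem_of_isZD [P.IsPrime] [Q.IsPrime] {x : R} (hx : IsZD x) : x ∈ P ∨ x ∈ Q := by
  obtain ⟨w, hw, hxw⟩ := hx
  have hw' : w ∉ P ⊓ Q := by rwa [hPQ, Submodule.mem_bot]
  rcases not_and_or.mp hw' with hwP | hwQ
  · exact Or.inl ((Ideal.IsPrime.mem_or_mem ‹_› (hxw ▸ P.zero_mem)).resolve_right hwP)
  · exact Or.inr ((Ideal.IsPrime.mem_or_mem ‹_› (hxw ▸ Q.zero_mem)).resolve_right hwQ)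

lemma isZD_add_of_mem [Q.IsPrime] {x y : R} (hx : IsZD x) (hx0 : x ≠ 0) (hxP : x ∈ P)
    (hyP : y ∈ P) : IsZD (x + y) := by
  obtain ⟨w, hw, hxw⟩ := hx
  have hxQ : x ∉ Q := fun hxQ => hx0 (by simpa [hPQ] using Submodule.mem_inf.mpr ⟨hxP, hxQ⟩)
  have hwQ : w ∈ Q := (Ideal.IsPrime.mem_or_mem ‹_› (hxw ▸ Q.zero_mem)).resolve_left hxQ
  have : (x + y) * w ∈ P ⊓ Q := ⟨P.mul_mem_right w (P.add_mem hxP hyP), Q.mul_mem_left _ hwQ⟩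
  exact ⟨w, hw, by simpa [hPQ] using this⟩

lemma mul_eq_zero_of_mem {x y : R} (hxP : x ∈ P) (hyQ : y ∈ Q) : x * y = 0 := by
  have : x * y ∈ P ⊓ Q := ⟨P.mul_mem_right y hxP, Q.mul_mem_left x hyQ⟩
  simpa [hPQ] using this

lemma gtComplete_of_isPrime_inf_eq_bot [P.IsPrime] [Q.IsPrime] : GTComplete R := by
  intro x y hx hx0 hy hy0 _
  rcases mem_or_mem_of_isZD hPQ hx with hxP | hxQ <;>
    rcases mem_or_mem_of_isZD hPQ hy with hyP | hyQ
  · exact Or.inr (isZD_add_of_mem hPQ hx hx0 hxP hyP)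
  · exact Or.inl (mul_eq_zero_of_mem hPQ hxP hyQ)
  · exact Or.inl (mul_comm x y ▸ mul_eq_zero_of_mem hPQ hyP hxQ)
  · exact Or.inr (isZD_add_of_mem (inf_comm P Q ▸ hPQ) hx hx0 hxQ hyQ)

end PrimePair

lemma gtComplete_of_mul_self_eq (hR : ∀ x : R, x * x = x) : GTComplete R := by
  intro x y _ _ _ _ _
  by_cases h : x + y - 1 = 0
  · exact Or.inl (by linear_combination x * h - hR x)
  · exact Or.inr ⟨x + y - 1, h, by linear_combination hR (x + y)⟩

lemma gtComplete_of_ideal {I : Ideal R} (hI : (I : Set R) = {x | IsZD x}) : GTComplete R := by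
  intro x y hx _ hy _ _
  have hmem (z : R) : z ∈ I ↔ IsZD z := Set.ext_iff.mp hI z
  exact Or.inr ((hmem _).mp (I.add_mem ((hmem x).mpr hx) ((hmem y).mpr hy)))

end

theorem stmt4 (R : Type) [CommRing R] [Nontrivial R] :
    GTComplete R ↔
      ((∀ x : R, x * x = x) ∨ (∃ I : Ideal R, (I : Set R) = {x | IsZD x}) ∨
        EmbedsInProdDomains R) := by
  refine ⟨fun hC => ?_, ?_⟩
  · by_cases hadd : ∀ x y : R, IsZD x → IsZD y → IsZD (x + y)
    · exact Or.inr (Or.inl (exists_ideal_coe_eq_setOf_isZD hadd))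
    push Not at hadd
    obtain ⟨a, b, ha, hb, hs⟩ := hadd
    have hab := hC.mul_eq_zero_of_not_isZD_add ha hb hs
    have hs' : ¬ IsZD (b + a) := add_comm a b ▸ hs
    have ha0 := ne_zero_of_not_isZD_add hb hs
    have hb0 := ne_zero_of_not_isZD_add ha hs'
    by_cases hPa : (R ∙ a).annihilator.IsPrime
    · by_cases hPb : (R ∙ b).annihilator.IsPrime
      · exact Or.inr (Or.inr (embedsInProdDomains_iff.mpr
          ⟨_, _, hPa, hPb, annihilator_inf_annihilator_eq_bot hs⟩))
      · exact Or.inl (hC.mul_self_eq_of_not_isPrime (mul_comm b a ▸ hab) hs' hb0 ha0 hPb)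
    · exact Or.inl (hC.mul_self_eq_of_not_isPrime hab hs ha0 hb0 hPa)
  · rintro (hR | ⟨I, hI⟩ | hE)
    · exact gtComplete_of_mul_self_eq hR
    · exact gtComplete_of_ideal hI
    · obtain ⟨P, Q, _, _, hPQ⟩ := embedsInProdDomains_iff.mp hE
      exact gtComplete_of_isPrime_inf_eq_bot hPQ
end

section
/- For a commutative ring R, the following are equivalent: (a) Z(R[x]) is an ideal of R[x]; (b) R satisfies property A and Z(R) is an ideal of R; (c) every ideal of R generated by finitely many zero-divisors has nonzero annihilator in R. -/
/-- R satisfies property A: every finitely generated ideal contained in Z(R)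
has nonzero annihilator. -/
def PropertyA (R : Type) [CommRing R] : Prop :=
  ∀ I : Ideal R, I.FG → (∀ x ∈ I, IsZD x) → ∃ r : R, r ≠ 0 ∧ ∀ x ∈ I, r * x = 0

/-- Every ideal of R generated by finitely many zero-divisors has nonzero annihilator. -/
def FinZDGenAnn (R : Type) [CommRing R] : Prop :=
  ∀ s : Finset R, (∀ x ∈ s, IsZD x) →
    ∃ r : R, r ≠ 0 ∧ ∀ x ∈ Ideal.span (s : Set R), r * x = 0

open Polynomial nonZeroDivisors

section

variable {R : Type*} [CommSemiring R]

lemma Ideal.forall_mem_span_mul_eq_zero_iff {s : Set R} {a : R} :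
    (∀ x ∈ Ideal.span s, a * x = 0) ↔ ∀ x ∈ s, a * x = 0 := by
  simpa [Submodule.mem_annihilator] using Submodule.mem_annihilator_span s a

namespace Polynomial

lemma smul_eq_zero_iff_forall_mem_contentIdeal {a : R} {p : R[X]} :
    a • p = 0 ↔ ∀ x ∈ p.contentIdeal, a * x = 0 := by
  rw [contentIdeal_def, Ideal.forall_mem_span_mul_eq_zero_iff]
  constructor
  · intro h x hx
    obtain ⟨n, -, rfl⟩ := mem_coeffs_iff.1 hx
    simpa using congrArg (coeff · n) h
  · intro h
    ext n
    by_cases hn : p.coeff n = 0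
    · simp [hn]
    · simpa using h _ (coeff_mem_coeffs hn)

lemma mem_map_C_iff_contentIdeal_le {I : Ideal R} {p : R[X]} :
    p ∈ I.map C ↔ p.contentIdeal ≤ I := by
  rw [Ideal.mem_map_C_iff]
  refine ⟨fun h => Ideal.span_le.2 fun x hx => ?_, fun h n => h (coeff_mem_contentIdeal p n)⟩
  obtain ⟨n, -, rfl⟩ := mem_coeffs_iff.1 hx
  exact h n

lemma exists_range_coeff_eq_insert_zero {S : Type*} [Semiring S] (s : Finset S) :
    ∃ p : S[X], Set.range p.coeff = insert 0 (s : Set S) := by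
  classical
  refine ⟨ofFn s.card fun i => s.equivFin.symm i, Set.Subset.antisymm ?_ ?_⟩
  · rintro _ ⟨n, rfl⟩
    by_cases hn : n < s.card
    · simp [ofFn_coeff_eq_val_of_lt _ hn]
    · simp [ofFn_coeff_eq_zero_of_ge _ (not_lt.1 hn)]
  · rintro x (rfl | hx)
    · exact ⟨s.card, ofFn_coeff_eq_zero_of_ge _ le_rfl⟩
    · exact ⟨s.equivFin ⟨x, hx⟩, by simp⟩

end Polynomial

end

def ZeroDivisorsFormIdeal (R : Type) [CommRing R] : Prop :=
  ∃ I : Ideal R, (I : Set R) = {x | IsZD x}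

section

variable {R : Type} [CommRing R]

lemma isZD_iff_notMem_nonZeroDivisors {x : R} : IsZD x ↔ x ∉ R⁰ := by
  simp [IsZD, notMem_nonZeroDivisors_iff_left, Set.Nonempty, and_comm]

lemma isZD_zero [Nontrivial R] : IsZD (0 : R) :=
  ⟨1, one_ne_zero, zero_mul 1⟩

lemma IsZD.C {x : R} (hx : IsZD x) : IsZD (C x) := by
  obtain ⟨y, hy, hxy⟩ := hx
  exact ⟨Polynomial.C y, C_ne_zero.2 hy, by rw [← C_mul, hxy, C_0]⟩

lemma isZD_of_mul_eq_zero {x a : R} (ha : a ≠ 0) (hax : a * x = 0) : IsZD x :=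
  ⟨a, ha, by rwa [mul_comm]⟩

namespace Polynomial

/-- McCoy's theorem. -/
lemma isZD_iff_exists_smul_eq_zero {p : R[X]} : IsZD p ↔ ∃ a : R, a ≠ 0 ∧ a • p = 0 :=
  isZD_iff_notMem_nonZeroDivisors.trans notMem_nonZeroDivisors_iff

lemma isZD_iff_contentIdeal {p : R[X]} :
    IsZD p ↔ ∃ a : R, a ≠ 0 ∧ ∀ x ∈ p.contentIdeal, a * x = 0 := by
  simp only [isZD_iff_exists_smul_eq_zero, smul_eq_zero_iff_forall_mem_contentIdeal]

end Polynomial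

lemma finZDGenAnn_of_zeroDivisorsFormIdeal_polynomial [Nontrivial R]
    (h : ZeroDivisorsFormIdeal R[X]) : FinZDGenAnn R := by
  obtain ⟨Z, hZ⟩ := h
  intro s hs
  obtain ⟨p, hp⟩ := exists_range_coeff_eq_insert_zero s
  have hpZ : p ∈ Z := by
    refine Ideal.polynomial_mem_ideal_of_coeff_mem_ideal Z p fun n => ?_
    rw [Ideal.mem_comap, ← SetLike.mem_coe, hZ]
    rcases (hp ▸ Set.mem_range_self n : p.coeff n ∈ insert 0 (s : Set R)) with h0 | hs'
    · exact h0 ▸ isZD_zero.C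
    · exact (hs _ hs').C
  have hsp : Ideal.span s ≤ p.contentIdeal := by
    rw [Ideal.span_le]
    intro x hx
    obtain ⟨n, rfl⟩ : x ∈ Set.range p.coeff := hp ▸ Set.mem_insert_of_mem 0 hx
    exact coeff_mem_contentIdeal p n
  obtain ⟨a, ha, hap⟩ := isZD_iff_contentIdeal.1 (hZ ▸ hpZ : p ∈ {q : R[X] | IsZD q})
  exact ⟨a, ha, fun x hx => hap x (hsp hx)⟩

lemma FinZDGenAnn.propertyA (h : FinZDGenAnn R) : PropertyA R := by
  rintro I ⟨s, rfl⟩ hI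
  exact h s fun x hx => hI x (Ideal.subset_span hx)

lemma FinZDGenAnn.zeroDivisorsFormIdeal [Nontrivial R] (h : FinZDGenAnn R) :
    ZeroDivisorsFormIdeal R := by
  classical
  refine ⟨{ carrier := {x | IsZD x}
            zero_mem' := isZD_zero
            add_mem' := fun {x y} (hx : IsZD x) (hy : IsZD y) => ?_
            smul_mem' := fun c x ⟨y, hy, hxy⟩ =>
              ⟨y, hy, by rw [smul_eq_mul, mul_assoc, hxy, mul_zero]⟩ },
    rfl⟩
  obtain ⟨a, ha, hax⟩ := h {x, y} (by simp [hx, hy])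
  refine isZD_of_mul_eq_zero ha (hax _ ?_)
  exact add_mem (Ideal.subset_span (by simp)) (Ideal.subset_span (by simp))

lemma zeroDivisorsFormIdeal_polynomial (hA : PropertyA R) (hZ : ZeroDivisorsFormIdeal R) :
    ZeroDivisorsFormIdeal R[X] := by
  obtain ⟨I, hI⟩ := hZ
  have hmem : ∀ x, x ∈ I ↔ IsZD x := fun x => Set.ext_iff.1 hI x
  refine ⟨I.map C, Set.ext fun p => ?_⟩
  rw [SetLike.mem_coe, mem_map_C_iff_contentIdeal_le, Set.mem_ofPred_eq, isZD_iff_contentIdeal]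
  constructor
  · exact fun hpI => hA _ (contentIdeal_FG p) fun x hx => (hmem x).1 (hpI hx)
  · rintro ⟨a, ha, hap⟩ x hx
    exact (hmem x).2 (isZD_of_mul_eq_zero ha (hap x hx))

end

theorem stmt5 (R : Type) [CommRing R] [Nontrivial R] :
    ((∃ I : Ideal (Polynomial R), (I : Set (Polynomial R)) = {p | IsZD p}) ↔
      (PropertyA R ∧ ∃ I : Ideal R, (I : Set R) = {x | IsZD x})) ∧
    ((∃ I : Ideal (Polynomial R), (I : Set (Polynomial R)) = {p | IsZD p}) ↔
      FinZDGenAnn R) := by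
  have hAC : ZeroDivisorsFormIdeal R[X] → FinZDGenAnn R :=
    finZDGenAnn_of_zeroDivisorsFormIdeal_polynomial
  have hCB (h : FinZDGenAnn R) : PropertyA R ∧ ZeroDivisorsFormIdeal R :=
    ⟨h.propertyA, h.zeroDivisorsFormIdeal⟩
  have hBA (h : PropertyA R ∧ ZeroDivisorsFormIdeal R) : ZeroDivisorsFormIdeal R[X] :=
    zeroDivisorsFormIdeal_polynomial h.1 h.2
  exact ⟨⟨hCB ∘ hAC, hBA⟩, ⟨hAC, hBA ∘ hCB⟩⟩
end

section
/- Let R be a decomposable commutative ring (isomorphic to a product of two nonzero rings). If Γ̃(R) = Γ(R), then R ≅ ℤ₂ × ℤ₂. -/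
/-- Auxiliary: R is isomorphic to A × B with A, B nonzero rings. -/
def DecomposesAsAux (R A B : Type) [CommRing R] [CommRing A] [CommRing B] : Prop :=
  Nontrivial A ∧ Nontrivial B ∧ Nonempty (R ≃+* A × B)

/-- R is decomposable: isomorphic to a direct product of two nonzero rings. -/
def IsDecomposableRing (R : Type) [iR : CommRing R] : Prop :=
  ∃ (A B : Type) (iA : CommRing A) (iB : CommRing B), @DecomposesAsAux R A B iR iA iB

/-- Γ̃(R) = Γ(R): distinct nonzero zero-divisors are adjacent in Γ̃(R) iff
they are adjacent in the zero-divisor graph Γ(R). -/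
def TildeEqGamma (R : Type) [CommRing R] : Prop :=
  ∀ x y : R, IsZD x → x ≠ 0 → IsZD y → y ≠ 0 → x ≠ y →
    ((x * y = 0 ∨ IsZD (x + y)) ↔ x * y = 0)

/-- Γ̃(R) = Z*(Γ(R)): distinct nonzero zero-divisors are adjacent in Γ̃(R) iff
they are adjacent in the total graph restricted to Z(R)*. -/
def TildeEqZStar (R : Type) [CommRing R] : Prop :=
  ∀ x y : R, IsZD x → x ≠ 0 → IsZD y → y ≠ 0 → x ≠ y →
    ((x * y = 0 ∨ IsZD (x + y)) ↔ IsZD (x + y))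

/- Idea: in `A × B` every `(c, 0)` is a zero-divisor, killed by `(0, 1)`. So for `a ∉ {0, 1}`
the vertices `(1, 0)` and `(a, 0)` are adjacent in Γ̃ through their sum, but not in Γ, since their
product is `(a, 0) ≠ 0`. Hence Γ̃ = Γ forces both factors to be `{0, 1}`, i.e. `ℤ₂`. -/

theorem IsZD.map_of_injective {R S : Type} [CommRing R] [CommRing S] {f : R →+* S}
    (hf : Function.Injective f) {x : R} (hx : IsZD x) : IsZD (f x) := by
  obtain ⟨y, hy, hxy⟩ := hx
  exact ⟨f y, (map_ne_zero_iff f hf).mpr hy, by rw [← map_mul, hxy, map_zero]⟩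

theorem isZD_ringEquiv_iff {R S : Type} [CommRing R] [CommRing S] (e : R ≃+* S) (x : R) :
    IsZD (e x) ↔ IsZD x := by
  refine ⟨fun hx => ?_, IsZD.map_of_injective (f := (e : R →+* S)) e.injective⟩
  simpa using IsZD.map_of_injective (f := (e.symm : S →+* R)) e.symm.injective hx

theorem TildeEqGamma.of_ringEquiv {R S : Type} [CommRing R] [CommRing S] (e : R ≃+* S)
    (h : TildeEqGamma R) : TildeEqGamma S := by
  intro x y hx hx0 hy hy0 hxy
  have hzd (z : S) : IsZD (e.symm z) ↔ IsZD z := by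
    simpa using isZD_ringEquiv_iff e.symm z
  have := h (e.symm x) (e.symm y) ((hzd x).mpr hx) (by simpa using hx0) ((hzd y).mpr hy)
    (by simpa using hy0) (e.symm.injective.ne hxy)
  rwa [← map_mul, ← map_add, hzd, map_eq_zero_iff _ e.symm.injective] at this

theorem isZD_mk_zero {A B : Type} [CommRing A] [CommRing B] [Nontrivial B] (c : A) :
    IsZD ((c, 0) : A × B) :=
  ⟨(0, 1), by simp [Prod.ext_iff], by simp⟩

theorem TildeEqGamma.eq_zero_or_eq_one_of_prod {A B : Type} [CommRing A] [CommRing B]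
    [Nontrivial B] (h : TildeEqGamma (A × B)) (a : A) : a = 0 ∨ a = 1 := by
  by_contra! ha
  have : Nontrivial A := nontrivial_of_ne a 0 ha.1
  have hprod := (h (1, 0) (a, 0) (isZD_mk_zero 1) (by simp [Prod.ext_iff]) (isZD_mk_zero a)
    (by simp [Prod.ext_iff, ha.1]) (by simp [Prod.ext_iff, Ne.symm ha.2])).mp
    (Or.inr (by simpa using isZD_mk_zero (B := B) (1 + a)))
  exact ha.1 (by simpa using hprod)

theorem nonempty_ringEquiv_zmod_two {A : Type} [CommRing A] [Nontrivial A]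
    (h : ∀ a : A, a = 0 ∨ a = 1) : Nonempty (A ≃+* ZMod 2) := by
  have hcard : Nat.card A = 2 :=
    Nat.card_eq_two_iff.mpr ⟨0, 1, zero_ne_one, Set.eq_univ_of_forall fun a => by simpa using h a⟩
  have : Finite A := Nat.finite_of_card_ne_zero (by simp [hcard])
  have := Fintype.ofFinite A
  exact ⟨(ZMod.ringEquivOfPrime A Nat.prime_two (by rwa [Fintype.card_eq_nat_card])).symm⟩

theorem stmt9_general (R : Type) [CommRing R] (hdec : IsDecomposableRing R)
    (h : TildeEqGamma R) : Nonempty (R ≃+* ZMod 2 × ZMod 2) := by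
  obtain ⟨A, B, _, _, hA, hB, ⟨e⟩⟩ := hdec
  have hAB : TildeEqGamma (A × B) := h.of_ringEquiv e
  have hBA : TildeEqGamma (B × A) := hAB.of_ringEquiv RingEquiv.prodComm
  obtain ⟨eA⟩ := nonempty_ringEquiv_zmod_two hAB.eq_zero_or_eq_one_of_prod
  obtain ⟨eB⟩ := nonempty_ringEquiv_zmod_two hBA.eq_zero_or_eq_one_of_prod
  exact ⟨e.trans (eA.prodCongr eB)⟩

theorem stmt9 (R : Type) [CommRing R] [Nontrivial R] (hdec : IsDecomposableRing R)
    (h : TildeEqGamma R) : Nonempty (R ≃+* ZMod 2 × ZMod 2) :=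
  stmt9_general R hdec h
end

section
/- Let R be a commutative ring with at least three nonzero zero-divisors, i.e., |Z(R)*| ≥ 3. Then Γ̃(R) is hypertriangulated: every edge of Γ̃(R) lies in a triangle. -/
/-!
If `xy ≠ 0`, then `x + y` is a zero-divisor and `-(x + y)` closes the triangle, since its sums
with `x` and `y` are `-y` and `-x`; in the degenerate cases where `-(x + y)` is `0`, `x` or `y`,
one of `x`, `y` divides the other and a nonzero annihilator of the divisor annihilates both.

If `xy = 0`, any nonzero annihilator `z ∉ {x, y}` of `x` closes the triangle, because `x`
also annihilates `z + y`; likewise for `y`. If there is none, then every nonzero zero-divisor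
`w` lies in `{x, y}`: otherwise `xw` is a nonzero annihilator of `y`, so `xw ∈ {x, y}`, and an
annihilator `c ≠ 0` of `w` then annihilates `x` or `y`, forcing `c ∈ {x, y}` and `wx = 0` or
`wy = 0`. This contradicts `|Z(R)*| ≥ 3`.
-/

theorem exists_ne_ne_of_three_le_mk {α : Type*} {P : α → Prop}
    (h : 3 ≤ Cardinal.mk {a : α // P a}) (x y : α) : ∃ w, P w ∧ w ≠ x ∧ w ≠ y := by
  by_contra! hc
  have hsub : {a | P a} ⊆ ({x, y} : Set α) := fun w hw =>
    (eq_or_ne w x).elim Or.inl fun hwx => Or.inr (hc w hw hwx)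
  have : (3 : Cardinal) ≤ 2 :=
    calc (3 : Cardinal) ≤ Cardinal.mk {a | P a} := h
      _ ≤ Cardinal.mk ({x, y} : Set α) := Cardinal.mk_le_mk_of_subset hsub
      _ ≤ 2 := (Cardinal.mk_insert_le).trans (by simp; norm_num)
  norm_num at this

section

variable {R : Type} [CommRing R]

theorem isZD_of_mul_eq_zero_s17 {x y : R} (hy : y ≠ 0) (hxy : x * y = 0) : IsZD x := ⟨y, hy, hxy⟩

theorem IsZD.neg {x : R} (hx : IsZD x) : IsZD (-x) := by
  obtain ⟨a, ha, hxa⟩ := hx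
  exact ⟨a, ha, by rw [neg_mul, hxa, neg_zero]⟩

def CompletesTriangle (x y z : R) : Prop :=
  IsZD z ∧ z ≠ 0 ∧ z ≠ x ∧ z ≠ y ∧ GTAdj z x ∧ GTAdj z y

theorem CompletesTriangle.symm {x y z : R} (h : CompletesTriangle x y z) :
    CompletesTriangle y x z :=
  let ⟨hz, hz0, hzx, hzy, hadjx, hadjy⟩ := h
  ⟨hz, hz0, hzy, hzx, hadjy, hadjx⟩

theorem completesTriangle_of_mul_eq_zero_of_mul_eq_zero {x y a : R} (ha : a ≠ 0)
    (hax : a * x = 0) (hay : a * y = 0) (hxy : x * y ≠ 0) : CompletesTriangle x y a := by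
  have hx : x ≠ 0 := left_ne_zero_of_mul hxy
  refine ⟨isZD_of_mul_eq_zero_s17 hx hax, ha, ?_, ?_, Or.inl hax, Or.inl hay⟩
  · rintro rfl
    exact hxy hay
  · rintro rfl
    exact hxy (by rw [mul_comm, hax])

theorem exists_completesTriangle_of_dvd {x y : R} (hx : IsZD x) (hdvd : x ∣ y)
    (hxy : x * y ≠ 0) : ∃ z, CompletesTriangle x y z := by
  obtain ⟨a, ha, hxa⟩ := hx
  obtain ⟨r, rfl⟩ := hdvd
  refine ⟨a, completesTriangle_of_mul_eq_zero_of_mul_eq_zero ha ?_ ?_ hxy⟩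
  · rw [mul_comm, hxa]
  · linear_combination r * hxa

theorem completesTriangle_neg_add {x y : R} (hx : IsZD x) (hy : IsZD y) (hs : IsZD (x + y))
    (hs0 : x + y ≠ 0) (hx2 : 2 * x + y ≠ 0) (hy2 : x + 2 * y ≠ 0) :
    CompletesTriangle x y (-(x + y)) := by
  refine ⟨hs.neg, neg_ne_zero.mpr hs0, ?_, ?_, Or.inr ?_, Or.inr ?_⟩
  · intro h
    exact hx2 (by linear_combination -h)
  · intro h
    exact hy2 (by linear_combination -h)
  · simpa [add_comm] using hy.neg
  · simpa using hx.neg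

theorem exists_completesTriangle_of_mul_ne_zero {x y : R} (hx : IsZD x) (hy : IsZD y)
    (hs : IsZD (x + y)) (hxy : x * y ≠ 0) : ∃ z, CompletesTriangle x y z := by
  rcases eq_or_ne (x + y) 0 with hs0 | hs0
  · exact exists_completesTriangle_of_dvd hx ⟨-1, by linear_combination hs0⟩ hxy
  rcases eq_or_ne (2 * x + y) 0 with hx2 | hx2
  · exact exists_completesTriangle_of_dvd hx ⟨-2, by linear_combination hx2⟩ hxy
  rcases eq_or_ne (x + 2 * y) 0 with hy2 | hy2
  · obtain ⟨z, hz⟩ := exists_completesTriangle_of_dvd (y := x) hy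
      ⟨-2, by linear_combination hy2⟩ (by rwa [mul_comm])
    exact ⟨z, hz.symm⟩
  exact ⟨_, completesTriangle_neg_add hx hy hs hs0 hx2 hy2⟩

theorem completesTriangle_of_mul_eq_zero {x y z : R} (hx : x ≠ 0) (hxy : x * y = 0)
    (hz0 : z ≠ 0) (hzx : z * x = 0) (hzne : z ≠ x ∧ z ≠ y) : CompletesTriangle x y z :=
  ⟨isZD_of_mul_eq_zero_s17 hx hzx, hz0, hzne.1, hzne.2, Or.inl hzx,
    Or.inr ⟨x, hx, by linear_combination hzx + hxy⟩⟩

theorem eq_or_eq_of_isZD {x y w : R} (hxy : x * y = 0)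
    (hannx : ∀ z, z * x = 0 → z ≠ 0 → z = x ∨ z = y)
    (hanny : ∀ z, z * y = 0 → z ≠ 0 → z = x ∨ z = y)
    (hw : IsZD w) (hw0 : w ≠ 0) : w = x ∨ w = y := by
  by_contra! hne
  have hwx : w * x ≠ 0 := fun h => hne.1 ((hannx w h hw0).resolve_right hne.2)
  have hwy : w * y ≠ 0 := fun h => hne.2 ((hanny w h hw0).resolve_left hne.1)
  obtain ⟨c, hc0, hwc⟩ := hw
  have hxw : x * w = x ∨ x * w = y :=
    hanny (x * w) (by linear_combination w * hxy) (by rwa [mul_comm])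
  have hc : c = x ∨ c = y := by
    rcases hxw with h | h
    · exact hannx c (by linear_combination x * hwc - c * h) hc0
    · exact hanny c (by linear_combination x * hwc - c * h) hc0
  rcases hc with rfl | rfl
  · exact hwx hwc
  · exact hwy hwc

theorem exists_completesTriangle_of_mul_eq_zero
    (h : 3 ≤ Cardinal.mk {x : R // IsZD x ∧ x ≠ 0}) {x y : R} (hx0 : x ≠ 0) (hy0 : y ≠ 0)
    (hxy : x * y = 0) : ∃ z, CompletesTriangle x y z := by
  by_contra! hnone
  have hannx : ∀ z, z * x = 0 → z ≠ 0 → z = x ∨ z = y := fun z hzx hz0 => by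
    by_contra! hne
    exact hnone z (completesTriangle_of_mul_eq_zero hx0 hxy hz0 hzx hne)
  have hanny : ∀ z, z * y = 0 → z ≠ 0 → z = x ∨ z = y := fun z hzy hz0 => by
    by_contra! hne
    exact hnone z (completesTriangle_of_mul_eq_zero hy0 (by rwa [mul_comm]) hz0 hzy
      hne.symm).symm
  obtain ⟨w, ⟨hw, hw0⟩, hwx, hwy⟩ := exists_ne_ne_of_three_le_mk h x y
  exact (eq_or_eq_of_isZD hxy hannx hanny hw hw0).elim hwx hwy

end

theorem stmt17_general (R : Type) [CommRing R]
    (h : 3 ≤ Cardinal.mk {x : R // IsZD x ∧ x ≠ 0}) :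
    ∀ x y : R, IsZD x → x ≠ 0 → IsZD y → y ≠ 0 → x ≠ y → GTAdj x y →
      ∃ z : R, IsZD z ∧ z ≠ 0 ∧ z ≠ x ∧ z ≠ y ∧ GTAdj z x ∧ GTAdj z y := by
  intro x y hx hx0 hy hy0 _ hadj
  by_cases hxy : x * y = 0
  · exact exists_completesTriangle_of_mul_eq_zero h hx0 hy0 hxy
  · exact exists_completesTriangle_of_mul_ne_zero hx hy (hadj.resolve_left hxy) hxy

theorem stmt17 (R : Type) [CommRing R] [Nontrivial R]
    (h : 3 ≤ Cardinal.mk {x : R // IsZD x ∧ x ≠ 0}) :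
    ∀ x y : R, IsZD x → x ≠ 0 → IsZD y → y ≠ 0 → x ≠ y → GTAdj x y →
      ∃ z : R, IsZD z ∧ z ≠ 0 ∧ z ≠ x ∧ z ≠ y ∧ GTAdj z x ∧ GTAdj z y :=
  stmt17_general R h
end
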